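/- For 0 < |q| < 1 and nonzero complex z: 2·θ(−z⁻²;q²)·θ(q⁻¹z⁻²;q²)·θ(−qz⁻²;q²)·θ(z²;q²) = θ(−1;q²)·θ(q;q²)·θ(−q⁻¹;q²)·θ(z⁻⁴;q²). -/

import Mathlib

/-!
With `(c; p)_∞ = ∏ (1 - pʲ c)` we have `θ(w; p) = (w; p)_∞ (p/w; p)_∞`. Splitting the products
into even and odd factors, or pairing `c` with `-c`, gives the dissection
`θ(w; q) = θ(w; q²) θ(qw; q²)` and the duplication `θ(w; q) θ(-w; q) = θ(w²; q²)`. Together they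
write `θ(z⁻⁴; q²)` as a product of four theta functions of nome `q²`, which the quasi-periodicity
`θ(pw; p) = -w⁻¹ θ(w; p)` and the inversion `θ(w⁻¹; p) = -w⁻¹ θ(w; p)` turn into the four factors
on the left, up to the factor `q`. The same relations, with Euler's identity
`(-x; x)_∞ (x; x²)_∞ = 1`, evaluate the constant `θ(-1; q²) θ(q; q²) θ(-q⁻¹; q²) = 2 q⁻¹`.
-/

noncomputable def theta (q w : ℂ) : ℂ := ∏' j : ℕ, (1 - q ^ j * w) * (1 - q ^ (j + 1) * w⁻¹)

/-- The infinite `q`-Pochhammer symbol `(c; p)_∞`. -/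
noncomputable def qPochhammer (p c : ℂ) : ℂ := ∏' j : ℕ, (1 - p ^ j * c)

section qPochhammer

variable {p : ℂ}

lemma summable_norm_neg_pow_mul (hp : ‖p‖ < 1) (c : ℂ) : Summable fun j : ℕ => ‖-(p ^ j * c)‖ := by
  simpa [norm_mul, norm_pow] using
    (summable_geometric_of_lt_one (norm_nonneg p) hp).mul_right ‖c‖

lemma multipliable_one_sub_pow_mul (hp : ‖p‖ < 1) (c : ℂ) :
    Multipliable fun j : ℕ => 1 - p ^ j * c := by
  simpa only [sub_eq_add_neg] using
    multipliable_one_add_of_summable (summable_norm_neg_pow_mul hp c)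

lemma qPochhammer_ne_zero (hp : ‖p‖ < 1) {c : ℂ} (h : ∀ j : ℕ, 1 - p ^ j * c ≠ 0) :
    qPochhammer p c ≠ 0 := by
  simp only [sub_eq_add_neg] at h
  simpa only [qPochhammer, sub_eq_add_neg] using
    tprod_one_add_ne_zero_of_summable h (summable_norm_neg_pow_mul hp c)

lemma qPochhammer_eq_one_sub_mul (hp : ‖p‖ < 1) (c : ℂ) :
    qPochhammer p c = (1 - c) * qPochhammer p (p * c) := by
  have hm : Multipliable fun j : ℕ => 1 - p ^ (j + 1) * c :=
    (multipliable_one_sub_pow_mul hp (p * c)).congr fun j => by ring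
  rw [qPochhammer, tprod_eq_zero_mul' (f := fun j : ℕ => 1 - p ^ j * c) hm, pow_zero, one_mul,
    qPochhammer]
  exact congrArg _ (tprod_congr fun j => by ring)

lemma qPochhammer_mul_qPochhammer_neg (hp : ‖p‖ < 1) (c : ℂ) :
    qPochhammer p c * qPochhammer p (-c) = qPochhammer (p ^ 2) (c ^ 2) := by
  rw [qPochhammer, qPochhammer, ← (multipliable_one_sub_pow_mul hp c).tprod_mul
    (multipliable_one_sub_pow_mul hp (-c)), qPochhammer]
  exact tprod_congr fun j => by ring

lemma norm_sq_lt_one (hp : ‖p‖ < 1) : ‖p ^ 2‖ < 1 := by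
  rw [norm_pow]
  exact pow_lt_one₀ (norm_nonneg p) hp two_ne_zero

lemma qPochhammer_eq_even_mul_odd (hp : ‖p‖ < 1) (c : ℂ) :
    qPochhammer p c = qPochhammer (p ^ 2) c * qPochhammer (p ^ 2) (p * c) := by
  have he : Multipliable fun j : ℕ => 1 - p ^ (2 * j) * c :=
    (multipliable_one_sub_pow_mul (norm_sq_lt_one hp) c).congr fun j => by ring
  have ho : Multipliable fun j : ℕ => 1 - p ^ (2 * j + 1) * c :=
    (multipliable_one_sub_pow_mul (norm_sq_lt_one hp) (p * c)).congr fun j => by ring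
  rw [qPochhammer, ← tprod_even_mul_odd (f := fun j : ℕ => 1 - p ^ j * c) he ho, qPochhammer,
    qPochhammer]
  congr 1 <;> exact tprod_congr fun j => by ring

/-- Euler's identity `(-x; x)_∞ (x; x²)_∞ = 1`. -/
lemma qPochhammer_neg_self_mul_qPochhammer_sq (hp : ‖p‖ < 1) :
    qPochhammer p (-p) * qPochhammer (p ^ 2) p = 1 := by
  have hp2 := norm_sq_lt_one hp
  have h_ne : qPochhammer (p ^ 2) (p ^ 2) ≠ 0 := by
    refine qPochhammer_ne_zero hp2 fun j h => ?_
    have h_norm : ‖(p ^ 2) ^ j * p ^ 2‖ < 1 := by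
      rw [← pow_succ, norm_pow]
      exact pow_lt_one₀ (norm_nonneg _) hp2 (Nat.succ_ne_zero j)
    rw [← sub_eq_zero.mp h, norm_one] at h_norm
    exact lt_irrefl 1 h_norm
  refine mul_left_cancel₀ h_ne ?_
  calc qPochhammer (p ^ 2) (p ^ 2) * (qPochhammer p (-p) * qPochhammer (p ^ 2) p)
      = qPochhammer p p * qPochhammer p (-p) := by
        rw [qPochhammer_eq_even_mul_odd hp p, ← sq]; ring
    _ = qPochhammer (p ^ 2) (p ^ 2) * 1 := by
        rw [qPochhammer_mul_qPochhammer_neg hp, mul_one]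

end qPochhammer

section theta

variable {p : ℂ}

lemma theta_eq_qPochhammer_mul (hp : ‖p‖ < 1) (w : ℂ) :
    theta p w = qPochhammer p w * qPochhammer p (p * w⁻¹) := by
  rw [theta, qPochhammer, qPochhammer, ← (multipliable_one_sub_pow_mul hp w).tprod_mul
    (multipliable_one_sub_pow_mul hp (p * w⁻¹))]
  exact tprod_congr fun j => by ring

lemma theta_inv (hp : ‖p‖ < 1) {w : ℂ} (hw : w ≠ 0) :
    theta p w⁻¹ = -w⁻¹ * theta p w := by
  rw [theta_eq_qPochhammer_mul hp, theta_eq_qPochhammer_mul hp, inv_inv,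
    qPochhammer_eq_one_sub_mul hp w⁻¹, qPochhammer_eq_one_sub_mul hp w]
  field_simp
  ring

lemma theta_self_mul (hp : ‖p‖ < 1) (hp0 : p ≠ 0) {w : ℂ} (hw : w ≠ 0) :
    theta p (p * w) = -w⁻¹ * theta p w := by
  have h_inv : p * (p * w)⁻¹ = w⁻¹ := by field_simp
  rw [theta_eq_qPochhammer_mul hp, h_inv, ← theta_inv hp hw, theta_eq_qPochhammer_mul hp,
    inv_inv, mul_comm]

lemma theta_eq_even_mul_odd (hp : ‖p‖ < 1) (hp0 : p ≠ 0) (w : ℂ) :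
    theta p w = theta (p ^ 2) w * theta (p ^ 2) (p * w) := by
  have h_inv : p ^ 2 * (p * w)⁻¹ = p * w⁻¹ := by field_simp
  rw [theta_eq_qPochhammer_mul hp, theta_eq_qPochhammer_mul (norm_sq_lt_one hp),
    theta_eq_qPochhammer_mul (norm_sq_lt_one hp), h_inv, qPochhammer_eq_even_mul_odd hp w,
    qPochhammer_eq_even_mul_odd hp (p * w⁻¹), ← mul_assoc p, ← sq]
  ring

lemma theta_mul_theta_neg (hp : ‖p‖ < 1) (w : ℂ) :
    theta p w * theta p (-w) = theta (p ^ 2) (w ^ 2) := by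
  rw [theta_eq_qPochhammer_mul hp, theta_eq_qPochhammer_mul hp,
    theta_eq_qPochhammer_mul (norm_sq_lt_one hp), inv_neg, mul_neg,
    show p ^ 2 * (w ^ 2)⁻¹ = (p * w⁻¹) ^ 2 by ring, ← qPochhammer_mul_qPochhammer_neg hp,
    ← qPochhammer_mul_qPochhammer_neg hp]
  ring

lemma theta_neg_one_mul_theta_sq_self (hp : ‖p‖ < 1) (hp0 : p ≠ 0) :
    theta p (-1) * theta (p ^ 2) p = 2 := by
  have h_neg_one : theta p (-1) = 2 * qPochhammer p (-p) ^ 2 := by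
    rw [theta_eq_qPochhammer_mul hp, qPochhammer_eq_one_sub_mul hp (-1)]
    ring_nf
  have h_sq : theta (p ^ 2) p = qPochhammer (p ^ 2) p ^ 2 := by
    rw [theta_eq_qPochhammer_mul (norm_sq_lt_one hp), show p ^ 2 * p⁻¹ = p by field_simp, ← sq]
  rw [h_neg_one, h_sq]
  linear_combination
    2 * (qPochhammer p (-p) * qPochhammer (p ^ 2) p + 1) * qPochhammer_neg_self_mul_qPochhammer_sq hp

lemma theta_sq_neg_one_mul_theta_sq_mul_theta_sq_neg_inv {q : ℂ} (hq0 : q ≠ 0) (hq1 : ‖q‖ < 1) :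
    theta (q ^ 2) (-1) * theta (q ^ 2) q * theta (q ^ 2) (-q⁻¹) = 2 * q⁻¹ := by
  have hq2 := norm_sq_lt_one hq1
  have h_neg_inv : theta (q ^ 2) (-q⁻¹) = q⁻¹ * theta (q ^ 2) (-q) := by
    have h := theta_self_mul hq2 (pow_ne_zero 2 hq0) (neg_ne_zero.mpr (inv_ne_zero hq0))
    rw [show q ^ 2 * -q⁻¹ = -q by field_simp, inv_neg, inv_inv, neg_neg] at h
    rw [h]
    field_simp
  rw [h_neg_inv, ← theta_neg_one_mul_theta_sq_self hq2 (pow_ne_zero 2 hq0),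
    ← theta_mul_theta_neg hq2]
  ring

end theta

theorem theta_degenerate_identity (q z : ℂ) (hq0 : 0 < ‖q‖)
    (hq1 : ‖q‖ < 1) (hz : z ≠ 0) :
    2 * (theta (q ^ 2) (-z⁻¹ ^ 2) * theta (q ^ 2) (q⁻¹ * z⁻¹ ^ 2) * theta (q ^ 2) (-(q * z⁻¹ ^ 2))
        * theta (q ^ 2) (z ^ 2))
      = theta (q ^ 2) (-1) * theta (q ^ 2) q * theta (q ^ 2) (-q⁻¹) * theta (q ^ 2) (z⁻¹ ^ 4) := by
  have hq : q ≠ 0 := norm_pos_iff.mp hq0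
  have hq2 := norm_sq_lt_one hq1
  have h_split : theta (q ^ 2) (z⁻¹ ^ 4) = theta (q ^ 2) (z⁻¹ ^ 2) * theta (q ^ 2) (q * z⁻¹ ^ 2)
      * (theta (q ^ 2) (-z⁻¹ ^ 2) * theta (q ^ 2) (-(q * z⁻¹ ^ 2))) := by
    rw [show z⁻¹ ^ 4 = (z⁻¹ ^ 2) ^ 2 by ring, ← theta_mul_theta_neg hq1,
      theta_eq_even_mul_odd hq1 hq, theta_eq_even_mul_odd hq1 hq, mul_neg]
  have h_inv : theta (q ^ 2) (z⁻¹ ^ 2) = -z⁻¹ ^ 2 * theta (q ^ 2) (z ^ 2) := by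
    rw [inv_pow, theta_inv hq2 (pow_ne_zero 2 hz)]
  have h_shift : theta (q ^ 2) (q * z⁻¹ ^ 2) = -(q * z ^ 2) * theta (q ^ 2) (q⁻¹ * z⁻¹ ^ 2) := by
    rw [show q * z⁻¹ ^ 2 = q ^ 2 * (q⁻¹ * z⁻¹ ^ 2) by field_simp,
      theta_self_mul hq2 (pow_ne_zero 2 hq) (by positivity)]
    field_simp
  rw [h_split, h_inv, h_shift, theta_sq_neg_one_mul_theta_sq_mul_theta_sq_neg_inv hq hq1]
  field_simp
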